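/- arXiv:math/0011067 — 2 statements merged into one kernel-verified Lean document; each statement's English description precedes it below -/
import Mathlib

section
/- Let K be a field of characteristic 2, let f₁, f₂ ∈ K, and let y₁, y₂ be elements of a commutative K-algebra with y₁² + y₁ = f₁ and y₂² + y₂ = f₂. Then y = y₁y₂ satisfies y⁴ + y³ + (f₁ + f₂)y² + f₁f₂ y + f₁²f₂² = 0. -/
theorem stmt_1 {K A : Type*} [Field K] [CharP K 2] [CommRing A] [Algebra K A]
    (f₁ f₂ : K) (y₁ y₂ : A)
    (h₁ : y₁ ^ 2 + y₁ = algebraMap K A f₁) (h₂ : y₂ ^ 2 + y₂ = algebraMap K A f₂) :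
    (y₁ * y₂) ^ 4 + (y₁ * y₂) ^ 3 + algebraMap K A (f₁ + f₂) * (y₁ * y₂) ^ 2
      + algebraMap K A (f₁ * f₂) * (y₁ * y₂) + algebraMap K A (f₁ ^ 2 * f₂ ^ 2) = 0 := by
  have h2 : (2 : A) = 0 := by
    have hK : (2 : K) = 0 := by
      exact_mod_cast CharP.cast_eq_zero K 2
    calc (2 : A) = algebraMap K A 2 := by rw [map_ofNat]
      _ = 0 := by rw [hK, map_zero]
  rw [map_add, map_mul, map_mul, map_pow, map_pow, ← h₁, ← h₂]
  linear_combination (y₁^4*y₂^4 + 3*y₁^3*y₂^3 + y₁^4*y₂^2 + 2*y₁^3*y₂^2 + y₁^2*y₂^4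
    + 2*y₁^2*y₂^3 + y₁^2*y₂^2 + y₁^4*y₂^3 + y₁^3*y₂^4) * h2
end

section
/- Let k be a field of characteristic 2, f₁,…,fₙ ∈ k, and y₁,…,yₙ elements of a commutative k-algebra with y_i² + y_i = f_i. Then the product over all subsets I ⊆ {1,…,n} of (Y − Π_{i∉I} y_i · Π_{i∈I}(y_i + 1)) is a monic polynomial of degree 2ⁿ in Y with all coefficients in k. -/
open Polynomial

section Aux

variable {R : Type*} [CommRing R]

private lemma pow_add_pow_mem (S : Subring R) (h2 : (2 : R) = 0) {y : R}
    (hy : y ^ 2 + y ∈ S) : ∀ d : ℕ, y ^ d + (y + 1) ^ d ∈ S := by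
  have key : ∀ d : ℕ, y ^ d + (y + 1) ^ d ∈ S ∧ y ^ (d + 1) + (y + 1) ^ (d + 1) ∈ S := by
    intro d
    induction d with
    | zero =>
      constructor
      · have : y ^ 0 + (y + 1) ^ 0 = (0 : R) := by
          simp only [pow_zero]; rw [one_add_one_eq_two, h2]
        rw [this]; exact S.zero_mem
      · have : y ^ 1 + (y + 1) ^ 1 = 2 * y + 1 := by ring
        rw [this, h2, zero_mul, zero_add]; exact S.one_mem
    | succ d ih =>
      refine ⟨ih.2, ?_⟩
      have hid : y ^ (d + 1 + 1) + (y + 1) ^ (d + 1 + 1)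
          = (2 * y + 1) * (y ^ (d + 1) + (y + 1) ^ (d + 1))
            - (y ^ 2 + y) * (y ^ d + (y + 1) ^ d) := by ring
      rw [hid, h2, zero_mul, zero_add, one_mul]
      exact S.sub_mem ih.2 (S.mul_mem hy ih.1)
  exact fun d => (key d).1

private lemma symm_pow_mem (S : Subring R) (h2 : (2 : R) = 0) {y : R}
    (hy : y ^ 2 + y ∈ S) (a b : ℕ) :
    y ^ a * (y + 1) ^ b + y ^ b * (y + 1) ^ a ∈ S := by
  have main : ∀ (a d : ℕ), y ^ a * (y + 1) ^ (a + d) + y ^ (a + d) * (y + 1) ^ a ∈ S := by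
    intro a d
    have hid : y ^ a * (y + 1) ^ (a + d) + y ^ (a + d) * (y + 1) ^ a
        = (y ^ 2 + y) ^ a * ((y + 1) ^ d + y ^ d) := by
      rw [pow_add, pow_add]
      have : y ^ 2 + y = y * (y + 1) := by ring
      rw [this, mul_pow]; ring
    rw [hid]
    refine S.mul_mem (S.pow_mem hy a) ?_
    rw [add_comm]
    exact pow_add_pow_mem S h2 hy d
  rcases le_total a b with h | h
  · obtain ⟨d, rfl⟩ := Nat.exists_eq_add_of_le h
    exact main a d
  · obtain ⟨d, rfl⟩ := Nat.exists_eq_add_of_le h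
    simpa [add_comm] using main b d

private lemma sum_pair_mem (S : Subring R) (m : ℕ) (G : ℕ → R)
    (hpair : ∀ i j, i + j = m → G i + G j ∈ S)
    (hdiag : ∀ i, i + i = m → G i ∈ S) :
    (∑ i ∈ Finset.range (m + 1), G i) ∈ S := by
  have main : ∀ (d a b : ℕ), a + b = m → b ≤ a + d →
      (∑ i ∈ Finset.Icc a b, G i) ∈ S := by
    intro d
    induction d with
    | zero =>
      intro a b hab hba
      rcases lt_or_eq_of_le (by omega : b ≤ a) with h | h
      · rw [Finset.Icc_eq_empty (by omega)]; simp only [Finset.sum_empty]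
        exact S.zero_mem
      · subst h
        rw [Finset.Icc_self, Finset.sum_singleton]
        exact hdiag b (by omega)
    | succ d ih =>
      intro a b hab hbd
      by_cases h : b ≤ a + d
      · exact ih a b hab h
      · have hlt : a < b := by omega
        have h1 : Finset.Icc a b = insert a (insert b (Finset.Ioo a b)) := by
          rw [Finset.Ioo_insert_right hlt, Finset.Ioc_insert_left (le_of_lt hlt)]
        rw [h1, Finset.sum_insert, Finset.sum_insert]
        · have h2 : G a + (G b + ∑ i ∈ Finset.Ioo a b, G i)
              = (G a + G b) + ∑ i ∈ Finset.Ioo a b, G i := by ring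
          rw [h2]
          refine S.add_mem (hpair a b hab) ?_
          have h3 : Finset.Ioo a b = Finset.Icc (a + 1) (b - 1) := by
            ext x; simp only [Finset.mem_Ioo, Finset.mem_Icc]; omega
          rw [h3]
          exact ih (a + 1) (b - 1) (by omega) (by omega)
        · simp only [Finset.mem_Ioo]; omega
        · simp only [Finset.mem_insert, Finset.mem_Ioo]; omega
  have hr : Finset.range (m + 1) = Finset.Icc 0 m := by
    ext x; simp only [Finset.mem_range, Finset.mem_Icc]; omega
  rw [hr]
  exact main m 0 m (by omega) (by omega)

private lemma coeff_scaled [Nontrivial R] {ι : Type*} [DecidableEq ι]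
    (u : Finset ι) (r : ι → R) (t : R) :
    ∀ m : ℕ, (∏ i ∈ u, (X + C (t * r i))).coeff m
      = t ^ (u.card - m) * (∏ i ∈ u, (X + C (r i))).coeff m := by
  induction u using Finset.induction_on with
  | empty => intro m; rcases m with _ | m <;> simp
  | @insert a u ha ih =>
    intro m
    rw [Finset.prod_insert ha, Finset.prod_insert ha, Finset.card_insert_of_notMem ha]
    have hdeg : (∏ i ∈ u, (X + C (r i))).natDegree ≤ u.card := by
      refine le_trans (Polynomial.natDegree_prod_le _ _) (le_of_eq ?_)
      simp [natDegree_X_add_C]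
    cases m with
    | zero =>
      simp only [mul_coeff_zero, coeff_add, coeff_X_zero, coeff_C_zero, zero_add,
        ih 0, Nat.sub_zero, pow_succ]
      ring
    | succ m =>
      rw [add_mul, add_mul, coeff_add, coeff_add, coeff_X_mul, coeff_X_mul,
        coeff_C_mul, coeff_C_mul, ih, ih]
      have e1 : u.card + 1 - (m + 1) = u.card - m := by omega
      rw [e1]
      by_cases hm : m < u.card
      · have e2 : u.card - m = (u.card - (m + 1)) + 1 := by omega
        rw [e2, pow_succ]; ring
      · have hz : (∏ i ∈ u, (X + C (r i))).coeff (m + 1) = 0 :=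
          Polynomial.coeff_eq_zero_of_natDegree_lt (by omega)
        rw [hz]; ring

private lemma key_lemma [Nontrivial R] {ι : Type*} [DecidableEq ι]
    (S : Subring R) (h2 : (2 : R) = 0) (y : ι → R) (s : Finset ι) :
    (∀ i ∈ s, y i ^ 2 + y i ∈ S) → ∀ m : ℕ,
    (∏ I ∈ s.powerset,
      (X + C ((∏ i ∈ s \ I, y i) * ∏ i ∈ I, (y i + 1)))).coeff m ∈ S := by
  induction s using Finset.induction_on with
  | empty =>
    intro _ m
    rw [Finset.powerset_empty, Finset.prod_singleton]
    simp only [Finset.sdiff_empty, Finset.prod_empty, mul_one]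
    rw [coeff_add, Polynomial.coeff_X, Polynomial.coeff_C]
    rcases m with _ | _ | m
    · simpa using S.one_mem
    · simpa using S.one_mem
    · simpa using S.zero_mem
  | @insert a s' ha ih =>
    intro hy m
    have hy' : ∀ i ∈ s', y i ^ 2 + y i ∈ S := fun i hi => hy i (Finset.mem_insert_of_mem hi)
    have hya : y a ^ 2 + y a ∈ S := hy a (Finset.mem_insert_self a s')
    have Pmem : ∀ m : ℕ,
        (∏ I ∈ s'.powerset,
          (X + C ((∏ i ∈ s' \ I, y i) * ∏ i ∈ I, (y i + 1)))).coeff m ∈ S := ih hy'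
    rw [Finset.prod_powerset_insert ha]
    have e1 : ∀ I ∈ s'.powerset,
        (X + C ((∏ i ∈ insert a s' \ I, y i) * ∏ i ∈ I, (y i + 1)))
          = X + C (y a * ((∏ i ∈ s' \ I, y i) * ∏ i ∈ I, (y i + 1))) := by
      intro I hI
      have haI : a ∉ I := fun h => ha (Finset.mem_powerset.mp hI h)
      have hs : insert a s' \ I = insert a (s' \ I) := Finset.insert_sdiff_of_notMem _ haI
      have has : a ∉ s' \ I := fun h => ha (Finset.mem_sdiff.mp h).1
      rw [hs, Finset.prod_insert has, mul_assoc]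
    have e2 : ∀ I ∈ s'.powerset,
        (X + C ((∏ i ∈ insert a s' \ insert a I, y i) * ∏ i ∈ insert a I, (y i + 1)))
          = X + C ((y a + 1) * ((∏ i ∈ s' \ I, y i) * ∏ i ∈ I, (y i + 1))) := by
      intro I hI
      have haI : a ∉ I := fun h => ha (Finset.mem_powerset.mp hI h)
      have hs : insert a s' \ insert a I = s' \ I := by
        ext x
        simp only [Finset.mem_sdiff, Finset.mem_insert, not_or]
        constructor
        · rintro ⟨h1 | h1, h2, h3⟩
          · exact absurd h1 h2
          · exact ⟨h1, h3⟩
        · rintro ⟨h1, h3⟩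
          exact ⟨Or.inr h1, fun he => ha (he ▸ h1), h3⟩
      rw [hs, Finset.prod_insert haI, mul_left_comm]
    rw [Finset.prod_congr rfl e1, Finset.prod_congr rfl e2]
    rw [Polynomial.coeff_mul, Finset.Nat.sum_antidiagonal_eq_sum_range_succ_mk]
    refine sum_pair_mem S m _ ?_ ?_
    · intro i j hij
      have hmi : m - i = j := by omega
      have hmj : m - j = i := by omega
      simp only [hmi, hmj, coeff_scaled]
      set c := s'.powerset.card with hc
      set Pi := (∏ I ∈ s'.powerset,
        (X + C ((∏ i ∈ s' \ I, y i) * ∏ i ∈ I, (y i + 1)))).coeff i with hPi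
      set Pj := (∏ I ∈ s'.powerset,
        (X + C ((∏ i ∈ s' \ I, y i) * ∏ i ∈ I, (y i + 1)))).coeff j with hPj
      have hre : (y a) ^ (c - i) * Pi * ((y a + 1) ^ (c - j) * Pj)
          + (y a) ^ (c - j) * Pj * ((y a + 1) ^ (c - i) * Pi)
          = (Pi * Pj) * ((y a) ^ (c - i) * (y a + 1) ^ (c - j)
              + (y a) ^ (c - j) * (y a + 1) ^ (c - i)) := by ring
      rw [hre]
      exact S.mul_mem (S.mul_mem (Pmem i) (Pmem j))
        (symm_pow_mem S h2 hya (c - i) (c - j))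
    · intro i hii
      have hmi : m - i = i := by omega
      simp only [hmi, coeff_scaled]
      set c := s'.powerset.card with hc
      set Pi := (∏ I ∈ s'.powerset,
        (X + C ((∏ i ∈ s' \ I, y i) * ∏ i ∈ I, (y i + 1)))).coeff i with hPi
      have hre : (y a) ^ (c - i) * Pi * ((y a + 1) ^ (c - i) * Pi)
          = (Pi * Pi) * ((y a) * (y a + 1)) ^ (c - i) := by
        rw [mul_pow]; ring
      rw [hre]
      have hmul : y a * (y a + 1) = y a ^ 2 + y a := by ring
      rw [hmul]
      exact S.mul_mem (S.mul_mem (Pmem i) (Pmem i)) (S.pow_mem hya _)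

end Aux

open Polynomial in
theorem stmt_14 {k A : Type*} [Field k] [CharP k 2] [CommRing A] [Nontrivial A]
    [Algebra k A] (n : ℕ) (f : Fin n → k) (y : Fin n → A)
    (hy : ∀ i, y i ^ 2 + y i = algebraMap k A (f i)) :
    (∏ I : Finset (Fin n),
        (X - C ((∏ i ∈ Iᶜ, y i) * ∏ i ∈ I, (y i + 1))) : A[X]).Monic ∧
    (∏ I : Finset (Fin n),
        (X - C ((∏ i ∈ Iᶜ, y i) * ∏ i ∈ I, (y i + 1))) : A[X]).natDegree = 2 ^ n ∧
    ∀ m : ℕ, (∏ I : Finset (Fin n),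
        (X - C ((∏ i ∈ Iᶜ, y i) * ∏ i ∈ I, (y i + 1))) : A[X]).coeff m ∈
      (algebraMap k A).range := by
  have h2k : (2 : k) = 0 := by
    have := CharP.cast_eq_zero k 2
    simpa using this
  have h2 : (2 : A) = 0 := by
    have : (2 : A) = algebraMap k A 2 := by
      rw [map_ofNat]
    rw [this, h2k, map_zero]
  have hXC : ∀ r : A, (X : A[X]) - C r = X + C r := by
    intro r
    have hcc : C r + C r = 0 := by
      rw [← C_add, ← two_mul, h2, zero_mul, map_zero]
    rw [sub_eq_add_neg, neg_eq_of_add_eq_zero_left hcc]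
  refine ⟨monic_prod_of_monic _ _ (fun I _ => monic_X_sub_C _), ?_, ?_⟩
  · rw [natDegree_prod_of_monic _ _ (fun I _ => monic_X_sub_C _)]
    simp only [natDegree_X_sub_C, Finset.sum_const, smul_eq_mul, mul_one,
      Finset.card_univ, Fintype.card_finset, Fintype.card_fin]
  · intro m
    have hrw : (∏ I : Finset (Fin n),
          (X - C ((∏ i ∈ Iᶜ, y i) * ∏ i ∈ I, (y i + 1))) : A[X])
        = ∏ I ∈ (Finset.univ : Finset (Fin n)).powerset,
          (X + C ((∏ i ∈ Finset.univ \ I, y i) * ∏ i ∈ I, (y i + 1))) := by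
      rw [Finset.powerset_univ]
      refine Finset.prod_congr rfl fun I _ => ?_
      rw [hXC, Finset.compl_eq_univ_sdiff]
    rw [hrw]
    refine key_lemma (algebraMap k A).range h2 y Finset.univ (fun i _ => ?_) m
    rw [hy i]
    exact ⟨f i, rfl⟩
end
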